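/- Set H_n(k) = (n+1)(α_{n,k+1} − α_{n,k}) for 0 ≤ k ≤ n and let 𝓗_n(s) = Σ_{k=0}^n H_n(k) s^k. Then for every complex number s with |s| < 1, 𝓗_n(s) → 1/(2p(1−s)) as n → ∞. -/
import Mathlib


open Filter

/-- Generating function convergence: with `H_n(k) = (n+1)(α_{n,k+1} - α_{n,k})` and
`𝓗_n(s) = Σ_{k=0}^n H_n(k) s^k`, for every complex `s` with `|s| < 1` we have
`𝓗_n(s) → 1/(2p(1-s))` as `n → ∞`. -/
theorem generating_function_limit
    (p : ℝ) (hp : 0 < p) (hp1 : p < 1)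
    (α : ℕ → ℕ → ℝ)
    (hα0 : ∀ n : ℕ, α n 0 = 0)
    (hα1 : ∀ n : ℕ, α n (n + 1) = 1)
    (hαrec : ∀ n : ℕ, 1 ≤ n → ∀ k : ℕ, 1 ≤ k → k ≤ n →
      α n k = 1 / (2 * (n + 1)) + (n / (n + 1)) * (p * α (n - 1) (k - 1) + (1 - p) * α (n - 1) k))
    (H : ℕ → ℕ → ℝ)
    (hH : ∀ n k : ℕ, k ≤ n → H n k = ((n : ℝ) + 1) * (α n (k + 1) - α n k)) :
    ∀ s : ℂ, ‖s‖ < 1 →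
      Tendsto (fun n : ℕ => ∑ k ∈ Finset.range (n + 1), (H n k : ℂ) * s ^ k) atTop
        (nhds (1 / (2 * (p : ℂ) * (1 - s)))) := by
  intro s hs
  -- basic nonvanishing facts
  have hp0 : (p : ℂ) ≠ 0 := by exact_mod_cast hp.ne'
  have hs1 : (1 : ℂ) - s ≠ 0 := by
    intro h
    rw [sub_eq_zero] at h
    rw [← h] at hs
    simp at hs
  -- three recurrences for H
  have hH0 : ∀ m : ℕ, H (m + 1) 0 = 1 / 2 + (1 - p) * H m 0 := by
    intro m
    have h1 := hαrec (m + 1) (by omega) 1 le_rfl (by omega)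
    simp only [Nat.add_sub_cancel, Nat.sub_self] at h1
    rw [hH (m + 1) 0 (by omega), hH m 0 (by omega), hα0, hα0, h1, hα0]
    push_cast
    have hne : (m : ℝ) + 1 + 1 ≠ 0 := by positivity
    field_simp
    ring
  have hHn : ∀ m : ℕ, H (m + 1) (m + 1) = 1 / 2 + p * H m m := by
    intro m
    have h1 := hαrec (m + 1) (by omega) (m + 1) (by omega) le_rfl
    simp only [Nat.add_sub_cancel] at h1
    rw [hH (m + 1) (m + 1) (by omega), hH m m (by omega), h1]
    rw [hα1, hα1]
    push_cast
    have hne : (m : ℝ) + 1 + 1 ≠ 0 := by positivity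
    field_simp
    ring
  have hHmid : ∀ m k : ℕ, k < m →
      H (m + 1) (k + 1) = p * H m k + (1 - p) * H m (k + 1) := by
    intro m k hk
    have h1 := hαrec (m + 1) (by omega) (k + 1) (by omega) (by omega)
    have h2 := hαrec (m + 1) (by omega) (k + 1 + 1) (by omega) (by omega)
    simp only [Nat.add_sub_cancel] at h1 h2
    rw [hH (m + 1) (k + 1) (by omega), hH m k (by omega), hH m (k + 1) (by omega), h1, h2]
    push_cast
    have hne : (m : ℝ) + 1 + 1 ≠ 0 := by positivity
    field_simp
    ring
  set c : ℂ := (1 - (p : ℂ)) + (p : ℂ) * s with hc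
  set L : ℂ := 1 / (2 * (p : ℂ) * (1 - s)) with hLdef
  set g : ℕ → ℂ := fun n : ℕ => ∑ k ∈ Finset.range (n + 1), (H n k : ℂ) * s ^ k with hgdef
  have hgn : ∀ n, g n = ∑ k ∈ Finset.range (n + 1), (H n k : ℂ) * s ^ k := fun n => rfl
  -- generating function recursion
  have hgrec : ∀ m : ℕ, g (m + 1) = 1 / 2 * (1 + s ^ (m + 1)) + c * g m := by
    intro m
    have e1 : g (m + 1) =
        ((∑ k ∈ Finset.range m,
            ((p : ℂ) * (H m k : ℂ) + (1 - (p : ℂ)) * (H m (k + 1) : ℂ)) * s ^ (k + 1))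
          + (H (m + 1) 0 : ℂ) * s ^ 0) + (H (m + 1) (m + 1) : ℂ) * s ^ (m + 1) := by
      rw [hgn (m + 1), Finset.sum_range_succ, Finset.sum_range_succ']
      congr 2
      apply Finset.sum_congr rfl
      intro k hk
      rw [hHmid m k (Finset.mem_range.mp hk)]
      push_cast
      ring
    have a1 : ∑ k ∈ Finset.range m, (H m k : ℂ) * s ^ k = g m - (H m m : ℂ) * s ^ m := by
      have h := Finset.sum_range_succ (fun k => (H m k : ℂ) * s ^ k) m
      rw [hgn m, h]
      ring
    have a2 : ∑ k ∈ Finset.range m, (H m (k + 1) : ℂ) * s ^ (k + 1) = g m - (H m 0 : ℂ) := by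
      have h := Finset.sum_range_succ' (fun k => (H m k : ℂ) * s ^ k) m
      rw [hgn m, h]
      simp
    have e2 : ∑ k ∈ Finset.range m,
        ((p : ℂ) * (H m k : ℂ) + (1 - (p : ℂ)) * (H m (k + 1) : ℂ)) * s ^ (k + 1)
        = (p : ℂ) * s * (g m - (H m m : ℂ) * s ^ m) + (1 - (p : ℂ)) * (g m - (H m 0 : ℂ)) := by
      have : ∀ k ∈ Finset.range m,
          ((p : ℂ) * (H m k : ℂ) + (1 - (p : ℂ)) * (H m (k + 1) : ℂ)) * s ^ (k + 1)
          = (p : ℂ) * s * ((H m k : ℂ) * s ^ k)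
            + (1 - (p : ℂ)) * ((H m (k + 1) : ℂ) * s ^ (k + 1)) := by
        intro k _
        rw [pow_succ]
        ring
      rw [Finset.sum_congr rfl this, Finset.sum_add_distrib, ← Finset.mul_sum, ← Finset.mul_sum,
        a1, a2]
    have b0 : (H (m + 1) 0 : ℂ) = 1 / 2 + (1 - (p : ℂ)) * (H m 0 : ℂ) := by
      have := hH0 m
      push_cast [this]
      ring
    have bn : (H (m + 1) (m + 1) : ℂ) = 1 / 2 + (p : ℂ) * (H m m : ℂ) := by
      have := hHn m
      push_cast [this]
      ring
    rw [e1, e2, b0, bn, hc]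
    rw [pow_succ]
    ring
  -- error recursion
  have hL : L * (1 - c) = 1 / 2 := by
    rw [hLdef, hc]
    field_simp
    ring
  have he : ∀ m : ℕ, g (m + 1) - L = c * (g m - L) + s ^ (m + 1) / 2 := by
    intro m
    rw [hgrec m]
    linear_combination -hL
  -- norm bound
  set r : ℝ := max ‖c‖ ‖s‖ with hr
  have hr0 : 0 ≤ r := le_trans (norm_nonneg c) (le_max_left _ _)
  have hrc : ‖c‖ ≤ r := le_max_left _ _
  have hrs : ‖s‖ ≤ r := le_max_right _ _
  have hr1 : r < 1 := by
    have h1 : ‖c‖ < 1 := by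
      calc ‖c‖ ≤ ‖(1 : ℂ) - (p : ℂ)‖ + ‖(p : ℂ) * s‖ := norm_add_le _ _
        _ = (1 - p) + p * ‖s‖ := by
            rw [norm_mul]
            have : ((1 : ℂ) - (p : ℂ)) = ((1 - p : ℝ) : ℂ) := by push_cast; ring
            rw [this, Complex.norm_real, Complex.norm_real,
              Real.norm_of_nonneg (by linarith), Real.norm_of_nonneg hp.le]
        _ < (1 - p) + p * 1 := by nlinarith
        _ = 1 := by ring
    exact max_lt h1 hs
  set C : ℝ := ‖g 0 - L‖ with hC
  have hbound : ∀ n : ℕ, ‖g n - L‖ ≤ r ^ n * (C + n / 2) := by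
    intro n
    induction n with
    | zero => simp [hC]
    | succ m ih =>
      have h1 : ‖g (m + 1) - L‖ ≤ ‖c‖ * ‖g m - L‖ + ‖s‖ ^ (m + 1) / 2 := by
        rw [he m]
        calc ‖c * (g m - L) + s ^ (m + 1) / 2‖
            ≤ ‖c * (g m - L)‖ + ‖s ^ (m + 1) / 2‖ := norm_add_le _ _
          _ = ‖c‖ * ‖g m - L‖ + ‖s‖ ^ (m + 1) / 2 := by
              rw [norm_mul, norm_div, norm_pow]
              norm_num
      have h2 : ‖s‖ ^ (m + 1) ≤ r ^ (m + 1) := pow_le_pow_left₀ (norm_nonneg s) hrs (m + 1)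
      have h3 : ‖c‖ * ‖g m - L‖ ≤ r * (r ^ m * (C + m / 2)) := by
        apply mul_le_mul hrc ih (norm_nonneg _) hr0
      have key : r * (r ^ m * (C + m / 2)) + r ^ (m + 1) / 2
          = r ^ (m + 1) * (C + (m + 1 : ℕ) / 2) := by
        push_cast
        rw [pow_succ]
        ring
      calc ‖g (m + 1) - L‖ ≤ ‖c‖ * ‖g m - L‖ + ‖s‖ ^ (m + 1) / 2 := h1
        _ ≤ r * (r ^ m * (C + m / 2)) + r ^ (m + 1) / 2 := by linarith
        _ = r ^ (m + 1) * (C + (m + 1 : ℕ) / 2) := key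
  -- conclusion
  have habs : |r| < 1 := by rwa [abs_of_nonneg hr0]
  have t1 : Tendsto (fun n : ℕ => (n : ℝ) * r ^ n) atTop (nhds 0) := by
    have hsum := summable_norm_pow_mul_geometric_of_norm_lt_one (R := ℝ) 1
      (by rwa [Real.norm_eq_abs])
    have := hsum.of_norm.tendsto_atTop_zero
    simpa using this
  have t2 : Tendsto (fun n : ℕ => r ^ n) atTop (nhds 0) :=
    tendsto_pow_atTop_nhds_zero_of_lt_one hr0 hr1
  have t3 : Tendsto (fun n : ℕ => r ^ n * (C + n / 2)) atTop (nhds 0) := by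
    have : (fun n : ℕ => r ^ n * (C + n / 2))
        = fun n : ℕ => C * r ^ n + (1 / 2) * ((n : ℝ) * r ^ n) := by
      funext n; ring
    rw [this]
    have := (t2.const_mul C).add (t1.const_mul (1 / 2))
    simpa using this
  have : Tendsto g atTop (nhds L) := by
    rw [tendsto_iff_norm_sub_tendsto_zero]
    exact squeeze_zero (fun n => norm_nonneg _) hbound t3
  exact this
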